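/- If there exists a negligible fcc-compatible function a : Λ → ℝ for a saturated packing Λ, then there exists a constant C such that for all x ∈ ℝ³ and r ≥ 1, the finite density satisfies δ(x,r,Λ) ≤ π/√18 + C/r. -/

import Mathlib

open MeasureTheory Metric Real Filter

noncomputable section

abbrev E3 := EuclideanSpace ℝ (Fin 3)

/-- A packing: centers pairwise at distance at least 2. -/
def IsPacking (Λ : Set E3) : Prop :=
  ∀ u ∈ Λ, ∀ v ∈ Λ, u ≠ v → 2 ≤ dist u v

/-- A saturated packing: a packing such that every point of space is within
distance 2 of some center. -/
def IsSaturated (Λ : Set E3) : Prop :=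
  IsPacking Λ ∧ ∀ x : E3, ∃ v ∈ Λ, dist x v ≤ 2

/-- `A(x,r,Λ)`: volume of the part of `B(x,r)` covered by the unit balls of the packing. -/
def packVol (Λ : Set E3) (x : E3) (r : ℝ) : ℝ :=
  (volume (closedBall x r ∩ ⋃ v ∈ Λ, closedBall v 1)).toReal

/-- `δ(x,r,Λ)`: the finite density. -/
def density (Λ : Set E3) (x : E3) (r : ℝ) : ℝ :=
  packVol Λ x r / (volume (closedBall x r)).toReal

/-- The Voronoi cell of `v` with respect to `Λ`. -/
def Voronoi (Λ : Set E3) (v : E3) : Set E3 :=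
  {x : E3 | ∀ w ∈ Λ, dist x v ≤ dist x w}

/-- `a` is negligible with constant `C₁`. -/
def NegligibleWith (Λ : Set E3) (a : E3 → ℝ) (C₁ : ℝ) : Prop :=
  ∀ (x : E3) (r : ℝ), 1 ≤ r → ∑ᶠ v ∈ Λ ∩ closedBall x r, a v ≤ C₁ * r ^ 2

/-- `a` is fcc-compatible for `Λ`. -/
def FccCompatible (Λ : Set E3) (a : E3 → ℝ) : Prop :=
  ∀ v ∈ Λ, Real.sqrt 32 ≤ (volume (Voronoi Λ v)).toReal + a v

end

/- Every center within `r + 1` of `x` carries a Voronoi cell of volume at least `√32 - a v`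
inside `B(x, r + 3)` (cells have radius at most 2 by saturation, and they overlap only in
null sets), so by negligibility there are at most `(4π/3)(r + 3)³/√32 + O(r²)` such centers.
These centers carry all unit balls meeting `B(x, r)`, whence
`δ(x, r, Λ) ≤ (r + 3)³/r³ · (4π/3)/√32 + O(1/r)`, and `(4π/3)/√32 = π/√18`. -/

lemma finite_inter_of_pairwise_le_dist {X : Type*} [PseudoMetricSpace X] {s K : Set X} {ε : ℝ}
    (hε : 0 < ε) (hs : s.Pairwise fun u v => ε ≤ dist u v) (hK : TotallyBounded K) :
    (s ∩ K).Finite := by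
  obtain ⟨t, htf, hcov⟩ := Metric.totallyBounded_iff.1 hK (ε / 2) (half_pos hε)
  refine (htf.biUnion fun y _ => (?_ : (s ∩ ball y (ε / 2)).Finite)).subset fun z hz => ?_
  · refine Set.Subsingleton.finite fun u hu v hv => by_contra fun huv => ?_
    have := dist_triangle_right u v y
    linarith [hs hu.1 hv.1 huv, mem_ball.1 hu.2, mem_ball.1 hv.2]
  · obtain ⟨y, hy, hzy⟩ := Set.mem_iUnion₂.1 (hcov hz.2)
    exact Set.mem_iUnion₂.2 ⟨y, hy, hz.1, hzy⟩

lemma IsPacking.finite_inter_closedBall {Λ : Set E3} (hΛ : IsPacking Λ) (x : E3) (r : ℝ) :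
    (Λ ∩ closedBall x r).Finite :=
  finite_inter_of_pairwise_le_dist two_pos hΛ (isCompact_closedBall x r).totallyBounded

lemma toReal_volume_closedBall {x : E3} {r : ℝ} (hr : 0 ≤ r) :
    (volume (closedBall x r)).toReal = r ^ 3 * (4 * π / 3) := by
  rw [EuclideanSpace.volume_closedBall_fin_three, ENNReal.toReal_mul, ENNReal.toReal_pow,
    ENNReal.toReal_ofReal hr, ENNReal.toReal_ofReal (by positivity)]
  ring

lemma isClosed_voronoi (Λ : Set E3) (v : E3) : IsClosed (Voronoi Λ v) := by
  simp only [Voronoi, Set.ofPred_forall]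
  exact isClosed_biInter fun w _ =>
    isClosed_le (continuous_id.dist continuous_const) (continuous_id.dist continuous_const)

lemma volume_voronoi_inter_voronoi {Λ : Set E3} {v w : E3} (hv : v ∈ Λ) (hw : w ∈ Λ)
    (hvw : v ≠ w) : volume (Voronoi Λ v ∩ Voronoi Λ w) = 0 := by
  have hsub : Voronoi Λ v ∩ Voronoi Λ w ⊆ (AffineSubspace.perpBisector v w : Set E3) :=
    fun z hz => (AffineSubspace.mem_perpBisector_iff_dist_eq).2 (le_antisymm (hz.1 w hw) (hz.2 v hv))
  exact measure_mono_null hsub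
    (Measure.addHaar_affineSubspace volume _ (AffineSubspace.perpBisector_eq_top.not.2 hvw))

lemma voronoi_subset_closedBall {Λ : Set E3} {R : ℝ} (hcov : ∀ z : E3, ∃ w ∈ Λ, dist z w ≤ R)
    (v : E3) : Voronoi Λ v ⊆ closedBall v R := fun z hz => by
  obtain ⟨w, hw, hzw⟩ := hcov z
  exact mem_closedBall.2 ((hz w hw).trans hzw)

open Finset

lemma sum_volume_voronoi_le {Λ : Set E3} {R : ℝ} (hcov : ∀ z : E3, ∃ w ∈ Λ, dist z w ≤ R)
    {F : Finset E3} {x : E3} {ρ : ℝ} (hF : ↑F ⊆ Λ ∩ closedBall x ρ) :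
    ∑ v ∈ F, (volume (Voronoi Λ v)).toReal ≤ (volume (closedBall x (ρ + R))).toReal := by
  have hfin : ∀ v ∈ F, volume (Voronoi Λ v) ≠ ⊤ := fun v _ =>
    ((measure_mono (voronoi_subset_closedBall hcov v)).trans_lt measure_closedBall_lt_top).ne
  rw [← ENNReal.toReal_sum hfin, ← measure_biUnion_finset₀ ?disj
    fun v _ => (isClosed_voronoi Λ v).measurableSet.nullMeasurableSet]
  case disj =>
    exact fun v hv w hw hvw => volume_voronoi_inter_voronoi (hF hv).1 (hF hw).1 hvw
  refine ENNReal.toReal_mono measure_closedBall_lt_top.ne (measure_mono ?_)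
  refine Set.iUnion₂_subset fun v hv =>
    (voronoi_subset_closedBall hcov v).trans (closedBall_subset_closedBall' ?_)
  linarith [mem_closedBall.1 (hF hv).2]

lemma packVol_le_card_mul {Λ : Set E3} {x : E3} {r : ℝ} {F : Finset E3}
    (hF : Λ ∩ closedBall x (r + 1) ⊆ F) : packVol Λ x r ≤ #F * (4 * π / 3) := by
  have hsub : closedBall x r ∩ ⋃ v ∈ Λ, closedBall v 1 ⊆ ⋃ v ∈ F, closedBall v 1 := by
    rintro y ⟨hyx, hy⟩
    obtain ⟨v, hv, hyv⟩ := Set.mem_iUnion₂.1 hy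
    refine Set.mem_iUnion₂.2 ⟨v, hF ⟨hv, mem_closedBall.2 ?_⟩, hyv⟩
    linarith [dist_triangle v y x, mem_closedBall'.1 hyv, mem_closedBall.1 hyx]
  calc packVol Λ x r ≤ (∑ v ∈ F, volume (closedBall v 1)).toReal :=
        ENNReal.toReal_mono (ENNReal.sum_ne_top.2 fun v _ => measure_closedBall_lt_top.ne)
          ((measure_mono hsub).trans (measure_biUnion_finset_le _ _))
    _ = #F * (4 * π / 3) := by
        rw [ENNReal.toReal_sum fun v _ => measure_closedBall_lt_top.ne]
        simp only [toReal_volume_closedBall zero_le_one, sum_const, nsmul_eq_mul]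
        ring

lemma density_le_card_div {Λ : Set E3} {x : E3} {r : ℝ} (hr : 0 < r) {F : Finset E3}
    (hF : Λ ∩ closedBall x (r + 1) ⊆ F) : density Λ x r ≤ #F / r ^ 3 := by
  rw [density, toReal_volume_closedBall hr.le]
  calc packVol Λ x r / (r ^ 3 * (4 * π / 3)) ≤ #F * (4 * π / 3) / (r ^ 3 * (4 * π / 3)) :=
        div_le_div_of_nonneg_right (packVol_le_card_mul hF) (by positivity)
    _ = #F / r ^ 3 := mul_div_mul_right _ _ (by positivity)

lemma NegligibleWith.sum_le {Λ : Set E3} {a : E3 → ℝ} {C₁ : ℝ} (ha : NegligibleWith Λ a C₁)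
    {x : E3} {ρ : ℝ} (hρ : 1 ≤ ρ) (hfin : (Λ ∩ closedBall x ρ).Finite) :
    ∑ v ∈ hfin.toFinset, a v ≤ C₁ * ρ ^ 2 := by
  simpa [← finsum_mem_coe_finset] using ha x ρ hρ

lemma FccCompatible.card_mul_le {Λ : Set E3} {a : E3 → ℝ} (ha : FccCompatible Λ a)
    {F : Finset E3} (hF : ↑F ⊆ Λ) :
    #F * √32 ≤ ∑ v ∈ F, (volume (Voronoi Λ v)).toReal + ∑ v ∈ F, a v := by
  rw [← sum_add_distrib, ← nsmul_eq_mul]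
  exact card_nsmul_le_sum F _ _ fun v hv => ha v (hF hv)

lemma four_pi_div_three_eq : 4 * π / 3 = π / √18 * √32 := by
  rw [show (32 : ℝ) = (4 / 3) ^ 2 * 18 by norm_num, Real.sqrt_mul (by positivity),
    Real.sqrt_sq (by norm_num)]
  field_simp

lemma div_cube_le_add_div {n δ c r : ℝ} (hr : 1 ≤ r) (hδ : 0 ≤ δ) (hc : 0 ≤ c)
    (hn : n ≤ δ * (r + 3) ^ 3 + c * (r + 1) ^ 2) : n / r ^ 3 ≤ δ + (63 * δ + 4 * c) / r := by
  have hr0 : 0 < r := by linarith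
  have hrhs : (δ + (63 * δ + 4 * c) / r) * r ^ 3 = δ * r ^ 3 + (63 * δ + 4 * c) * r ^ 2 := by
    field_simp
  rw [div_le_iff₀ (by positivity), hrhs]
  nlinarith [mul_nonneg hδ (sub_nonneg.2 hr), mul_nonneg hc (sub_nonneg.2 hr),
    mul_nonneg (mul_nonneg hδ (sub_nonneg.2 hr)) hr0.le,
    mul_nonneg (mul_nonneg hc (sub_nonneg.2 hr)) hr0.le]

theorem density_bound (Λ : Set E3) (hΛ : IsSaturated Λ)
    (a : E3 → ℝ) (C₁ : ℝ)
    (hneg : NegligibleWith Λ a C₁) (hfcc : FccCompatible Λ a) :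
    ∃ C : ℝ, ∀ (x : E3) (r : ℝ), 1 ≤ r →
      density Λ x r ≤ π / Real.sqrt 18 + C / r := by
  refine ⟨63 * (π / √18) + 4 * |C₁|, fun x r hr => ?_⟩
  have hfin := hΛ.1.finite_inter_closedBall x (r + 1)
  set F := hfin.toFinset
  have hF : ↑F = Λ ∩ closedBall x (r + 1) := hfin.coe_toFinset
  have hcard : #F * √32 ≤ (r + 1 + 2) ^ 3 * (4 * π / 3) + C₁ * (r + 1) ^ 2 := by
    have hfcc_sum := hfcc.card_mul_le (hF ▸ Set.inter_subset_left)
    have hvoronoi := sum_volume_voronoi_le hΛ.2 hF.le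
    rw [toReal_volume_closedBall (by linarith)] at hvoronoi
    linarith [hneg.sum_le (by linarith) hfin]
  have hcount : (#F : ℝ) ≤ π / √18 * (r + 3) ^ 3 + |C₁| * (r + 1) ^ 2 := by
    have hs : 1 ≤ √32 := Real.one_le_sqrt.2 (by norm_num)
    rw [four_pi_div_three_eq, show r + 1 + 2 = r + 3 by ring] at hcard
    refine le_of_mul_le_mul_right ?_ (zero_lt_one.trans_le hs)
    nlinarith [mul_nonneg (sub_nonneg.2 (le_abs_self C₁)) (sq_nonneg (r + 1)),
      mul_nonneg (mul_nonneg (abs_nonneg C₁) (sq_nonneg (r + 1))) (sub_nonneg.2 hs)]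
  calc density Λ x r ≤ #F / r ^ 3 := density_le_card_div (by linarith) hF.ge
    _ ≤ _ := div_cube_le_add_div hr (by positivity) (abs_nonneg C₁) hcount
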